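/- arXiv:1804.09653 — 2 statements merged into one kernel-verified Lean document; each statement's English description precedes it below -/
import Mathlib

section
/- Let P' be a finite nonempty set of points in ℝ^d whose minimum enclosing ball has radius r_opt > 0, let ε ∈ (0,1), and let h = ⌈2/ε⌉ + 1. Then there is no sequence of points p_1, …, p_h ∈ P' such that for every i with 1 ≤ i ≤ h−1 one has ‖p_{i+1} − c_i‖ > (1+ε)·r_opt, where c_i denotes the center of the minimum enclosing ball of {p_1, …, p_i}. Equivalently, for any such sequence of points of P' there must exist an index i ≤ h−1 at which every point of P' lies within distance (1+ε)·r_opt of c_i or the selection condition fails. -/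
/-! If a ball of radius `R` around `c'` contains `S`, the minimum enclosing ball `(c, r)` of `S`
satisfies `r² + |c c'|² ≤ R²`, since otherwise moving `c` slightly towards `c'` would shrink it.
So with `a = (1 + ε) r_opt`, the far point `p_{i+1}` forces `r_{i+1} > (r_i² + a²) / (2a)`, and
by induction `r_i > a (i - 1) / (i + 1)`. Every `r_i` is at most `r_opt`, whereas at `i = h`
the bound exceeds `r_opt` because `ε (h - 1) ≥ 2`. -/

/-- `IsMEB P c r` says the closed ball of center `c` and radius `r` is the minimum enclosing
ball of `P`: it contains `P`, and any ball containing `P` has radius at least `r`. -/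
def IsMEB {d : ℕ} (P : Set (EuclideanSpace ℝ (Fin d)))
    (c : EuclideanSpace ℝ (Fin d)) (r : ℝ) : Prop :=
  (∀ p ∈ P, dist p c ≤ r) ∧
    ∀ (c' : EuclideanSpace ℝ (Fin d)) (r' : ℝ), (∀ p ∈ P, dist p c' ≤ r') → r ≤ r'

open Set Filter Topology

theorem dist_lineMap_sq {E : Type*} [NormedAddCommGroup E] [InnerProductSpace ℝ E]
    (s c c' : E) (t : ℝ) :
    dist s (AffineMap.lineMap c c' t) ^ 2 =
      (1 - t) * dist s c ^ 2 + t * dist s c' ^ 2 - t * (1 - t) * dist c c' ^ 2 := by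
  have hs : s - AffineMap.lineMap c c' t = (s - c) - t • (c' - c) := by
    rw [AffineMap.lineMap_apply_module']; abel
  have hs' : s - c' = (s - c) - (c' - c) := by abel
  rw [dist_eq_norm, dist_eq_norm, dist_eq_norm, dist_comm, dist_eq_norm, hs, hs']
  generalize s - c = u
  generalize c' - c = v
  rw [norm_sub_sq_real, norm_sub_sq_real, norm_smul, real_inner_smul_right, Real.norm_eq_abs,
    mul_pow, sq_abs]
  ring

theorem mul_lt_add_two_mul_of_sq_add_sq_lt {a n ρ R : ℝ} (ha : 0 < a) (hn : 1 ≤ n)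
    (hρ : a * (n - 1) ≤ (n + 1) * ρ) (hR : ρ ^ 2 + a ^ 2 < 2 * a * R) :
    a * n < (n + 2) * R := by
  have hsq : (a * (n - 1)) ^ 2 ≤ ((n + 1) * ρ) ^ 2 := pow_le_pow_left₀ (by nlinarith) hρ 2
  have hR' : a * (n ^ 2 + 1) < (n + 1) ^ 2 * R := by nlinarith
  nlinarith

theorem mul_sub_one_lt_of_sq_add_sq_lt {a : ℝ} (ha : 0 < a) {r : ℕ → ℝ} {h : ℕ}
    (hr₁ : 0 ≤ r 1) (hrec : ∀ i, 1 ≤ i → i < h → r i ^ 2 + a ^ 2 < 2 * a * r (i + 1)) :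
    ∀ i, 2 ≤ i → i ≤ h → a * ((i : ℝ) - 1) < ((i : ℝ) + 1) * r i := by
  intro i hi
  induction i, hi using Nat.le_induction with
  | base =>
    intro h2
    have := mul_lt_add_two_mul_of_sq_add_sq_lt ha le_rfl (by simpa using hr₁) (hrec 1 le_rfl h2)
    norm_num at this ⊢
    linarith
  | succ i hi ih =>
    intro hih
    have := mul_lt_add_two_mul_of_sq_add_sq_lt ha (by exact_mod_cast (show 1 ≤ i by omega))
      (ih (by omega)).le (hrec i (by omega) hih)
    push_cast
    linarith

namespace IsMEB

variable {d : ℕ} {S T : Set (EuclideanSpace ℝ (Fin d))} {c c' : EuclideanSpace ℝ (Fin d)}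
  {r R : ℝ}

theorem radius_nonneg (hS : IsMEB S c r) (hne : S.Nonempty) : 0 ≤ r :=
  let ⟨s, hs⟩ := hne
  dist_nonneg.trans (hS.1 s hs)

theorem sq_radius_le (hS : IsMEB S c r) (hne : S.Nonempty) {m : EuclideanSpace ℝ (Fin d)}
    {B : ℝ} (hB : ∀ s ∈ S, dist s m ^ 2 ≤ B) : r ^ 2 ≤ B := by
  have hr : r ≤ √B := hS.2 m √B fun s hs => Real.le_sqrt_of_sq_le (hB s hs)
  obtain ⟨s, hs⟩ := hne
  calc r ^ 2 ≤ √B ^ 2 := pow_le_pow_left₀ (hS.radius_nonneg ⟨s, hs⟩) hr 2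
    _ = B := Real.sq_sqrt ((sq_nonneg _).trans (hB s hs))

theorem sq_add_dist_sq_le (hS : IsMEB S c r) (hne : S.Nonempty)
    (hR : ∀ s ∈ S, dist s c' ≤ R) : r ^ 2 + dist c c' ^ 2 ≤ R ^ 2 := by
  set δ := dist c c'
  have hmove : ∀ t ∈ Ioc (0 : ℝ) 1, r ^ 2 + δ ^ 2 ≤ R ^ 2 + t * δ ^ 2 := by
    rintro t ⟨ht0, ht1⟩
    have : r ^ 2 ≤ (1 - t) * r ^ 2 + t * R ^ 2 - t * (1 - t) * δ ^ 2 := by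
      refine hS.sq_radius_le hne (m := AffineMap.lineMap c c' t) fun s hs => ?_
      rw [dist_lineMap_sq]
      have h1 := pow_le_pow_left₀ dist_nonneg (hS.1 s hs) 2
      have h2 := pow_le_pow_left₀ dist_nonneg (hR s hs) 2
      nlinarith
    nlinarith
  have hlim : Tendsto (fun t : ℝ => R ^ 2 + t * δ ^ 2) (𝓝[>] 0) (𝓝 (R ^ 2 + 0 * δ ^ 2)) :=
    ((continuous_const.add (continuous_id.mul continuous_const)).tendsto 0).mono_left
      nhdsWithin_le_nhds
  simpa using ge_of_tendsto hlim (eventually_of_mem (Ioc_mem_nhdsGT one_pos) hmove)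

theorem sq_add_sq_lt_two_mul_mul (hS : IsMEB S c r) (hT : IsMEB T c' R) (hne : S.Nonempty)
    (hST : S ⊆ T) {q : EuclideanSpace ℝ (Fin d)} (hq : q ∈ T) {a : ℝ} (hra : r < a)
    (hfar : a < dist q c) : r ^ 2 + a ^ 2 < 2 * a * R := by
  have hpyth := hS.sq_add_dist_sq_le hne fun s hs => hT.1 s (hST hs)
  have hr := hS.radius_nonneg hne
  have hqc : dist q c ≤ R + dist c c' := by
    linarith [dist_triangle q c' c, hT.1 q hq, dist_comm c c']
  rcases le_or_gt a R with haR | hRa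
  · nlinarith
  · nlinarith [dist_nonneg (x := c) (y := c')]

end IsMEB

theorem no_long_far_sequence_general {d : ℕ}
    (P' : Set (EuclideanSpace ℝ (Fin d)))
    (copt : EuclideanSpace ℝ (Fin d)) (ropt : ℝ) (hopt : IsMEB P' copt ropt) (hr : 0 < ropt)
    (ε : ℝ) (hε : 0 < ε) (h : ℕ) (hh : h = ⌈2 / ε⌉₊ + 1) :
    ¬ ∃ (p : ℕ → EuclideanSpace ℝ (Fin d)) (c : ℕ → EuclideanSpace ℝ (Fin d)) (r : ℕ → ℝ),
        (∀ i : ℕ, 1 ≤ i → i ≤ h → p i ∈ P') ∧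
        (∀ i : ℕ, 1 ≤ i → i ≤ h → IsMEB (p '' Set.Icc 1 i) (c i) (r i)) ∧
        (∀ i : ℕ, 1 ≤ i → i ≤ h - 1 → (1 + ε) * ropt < dist (p (i + 1)) (c i)) := by
  rintro ⟨p, c, r, hmem, hmeb, hfar⟩
  set a := (1 + ε) * ropt
  have hPi_ne : ∀ i, 1 ≤ i → (p '' Icc 1 i).Nonempty := fun i hi => ⟨p 1, 1, ⟨le_rfl, hi⟩, rfl⟩
  have hr_le : ∀ i, 1 ≤ i → i ≤ h → r i ≤ ropt := fun i hi hih =>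
    (hmeb i hi hih).2 copt ropt <| by
      rintro _ ⟨j, hj, rfl⟩
      exact hopt.1 _ (hmem j hj.1 (hj.2.trans hih))
  have hrec : ∀ i, 1 ≤ i → i < h → r i ^ 2 + a ^ 2 < 2 * a * r (i + 1) := fun i hi hih =>
    (hmeb i hi hih.le).sq_add_sq_lt_two_mul_mul (hmeb (i + 1) (by omega) hih) (hPi_ne i hi)
      (image_mono (Icc_subset_Icc_right (by omega))) ⟨i + 1, ⟨by omega, le_rfl⟩, rfl⟩
      ((hr_le i hi hih.le).trans_lt (by nlinarith)) (hfar i hi (by omega))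
  have h2 : 2 ≤ h := by
    have : 0 < ⌈2 / ε⌉₊ := Nat.ceil_pos.2 (by positivity)
    omega
  have hbound := mul_sub_one_lt_of_sq_add_sq_lt (by positivity)
    ((hmeb 1 le_rfl (by omega)).radius_nonneg (hPi_ne 1 le_rfl)) hrec h h2 le_rfl
  have hceil : 2 ≤ ε * ((h : ℝ) - 1) := by
    rw [← div_le_iff₀' hε, hh]
    push_cast
    simpa using Nat.le_ceil (2 / ε)
  have := hr_le h (by omega) le_rfl
  nlinarith

/-- if `P'` is a finite nonempty set with MEB radius `r_opt > 0`, `ε ∈ (0,1)` and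
`h = ⌈2/ε⌉ + 1`, then there is no sequence `p₁, …, p_h ∈ P'` such that for every
`1 ≤ i ≤ h − 1` one has `‖p_{i+1} − c_i‖ > (1+ε)·r_opt`, where `c_i` is the MEB center of
`{p₁, …, p_i}`. -/
theorem no_long_far_sequence {d : ℕ}
    (P' : Set (EuclideanSpace ℝ (Fin d))) (hfin : P'.Finite) (hne : P'.Nonempty)
    (copt : EuclideanSpace ℝ (Fin d)) (ropt : ℝ) (hopt : IsMEB P' copt ropt) (hr : 0 < ropt)
    (ε : ℝ) (hε : 0 < ε) (hε1 : ε < 1) (h : ℕ) (hh : h = ⌈2 / ε⌉₊ + 1) :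
    ¬ ∃ (p : ℕ → EuclideanSpace ℝ (Fin d)) (c : ℕ → EuclideanSpace ℝ (Fin d)) (r : ℕ → ℝ),
        (∀ i : ℕ, 1 ≤ i → i ≤ h → p i ∈ P') ∧
        (∀ i : ℕ, 1 ≤ i → i ≤ h → IsMEB (p '' Set.Icc 1 i) (c i) (r i)) ∧
        (∀ i : ℕ, 1 ≤ i → i ≤ h - 1 → (1 + ε) * ropt < dist (p (i + 1)) (c i)) :=
  no_long_far_sequence_general P' copt ropt hopt hr ε hε h hh
end

section
/- Let Q be a finite nonempty set of points in ℝ^d with minimum enclosing ball of center c_Q and radius r_Q, let ε' ∈ (0,1), and let the sequence (c_t)_{t≥1} be defined by c_1 ∈ Q and c_{t+1} = c_t + (1/(t+1))·(q_t − c_t) with q_t a farthest point of Q from c_t. Then for N = ⌈1/ε'²⌉, every point of Q lies within distance (1+ε')·r_Q of c_N; that is, c_N is the center of a (1+ε')-approximate minimum enclosing ball of Q. -/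
theorem dist_sq_add_smul_sub {E : Type*} [NormedAddCommGroup E] [InnerProductSpace ℝ E]
    (z x y : E) (s : ℝ) :
    dist z (x + s • (y - x)) ^ 2
      = (1 - s) * dist z x ^ 2 + s * dist z y ^ 2 - s * (1 - s) * dist x y ^ 2 := by
  have hzx : z - (x + s • (y - x)) = (z - x) - s • (y - x) := by abel
  have hzy : z - y = (z - x) - (y - x) := by abel
  rw [dist_eq_norm, dist_eq_norm, dist_eq_norm, dist_eq_norm', hzx, hzy,
    norm_sub_sq_real (z - x) (s • (y - x)), norm_sub_sq_real (z - x) (y - x),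
    inner_smul_right, norm_smul, mul_pow, Real.norm_eq_abs, sq_abs]
  ring

namespace IsMEB

variable {d : ℕ} {P : Set (EuclideanSpace ℝ (Fin d))} {c : EuclideanSpace ℝ (Fin d)} {r : ℝ}

theorem nonempty (h : IsMEB P c r) : P.Nonempty := by
  rw [Set.nonempty_iff_ne_empty]
  rintro rfl
  linarith [h.2 c (r - 1) (by simp)]

theorem radius_nonneg_s18 (h : IsMEB P c r) : 0 ≤ r :=
  let ⟨p, hp⟩ := h.nonempty
  dist_nonneg.trans (h.1 p hp)

theorem sq_radius_le_s18 (h : IsMEB P c r) {y : EuclideanSpace ℝ (Fin d)} {ρ : ℝ}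
    (hy : ∀ p ∈ P, dist p y ^ 2 ≤ ρ) : r ^ 2 ≤ ρ := by
  obtain ⟨p, hp⟩ := h.nonempty
  have hρ : 0 ≤ ρ := (sq_nonneg _).trans (hy p hp)
  exact (Real.le_sqrt h.radius_nonneg_s18 hρ).1 <|
    h.2 y _ fun p hp => Real.le_sqrt_of_sq_le (hy p hp)

theorem sq_radius_add_dist_sq_le (h : IsMEB P c r) {x : EuclideanSpace ℝ (Fin d)} {R : ℝ}
    (hx : ∀ p ∈ P, dist p x ≤ R) : r ^ 2 + dist x c ^ 2 ≤ R ^ 2 := by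
  by_contra! hlt
  set D := dist x c
  set g := r ^ 2 + D ^ 2 - R ^ 2
  have hg : 0 < g := by linarith
  -- `s` is small enough (`s * D² < g`) that `c + s • (x - c)` centres a ball smaller than `r`
  set s := g / (g + D ^ 2)
  have hs₀ : 0 < s := by positivity
  have hs₁ : s ≤ 1 := div_le_one_of_le₀ (by nlinarith) (by positivity)
  have hsD : s * D ^ 2 < g := by
    rw [div_mul_eq_mul_div, div_lt_iff₀ (by positivity)]
    nlinarith
  have hshift : r ^ 2 ≤ (1 - s) * r ^ 2 + s * R ^ 2 - s * (1 - s) * D ^ 2 := by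
    refine h.sq_radius_le_s18 (y := c + s • (x - c)) fun p hp => ?_
    rw [dist_sq_add_smul_sub, dist_comm c x]
    have hpc : dist p c ^ 2 ≤ r ^ 2 := pow_le_pow_left₀ dist_nonneg (h.1 p hp) 2
    have hpx : dist p x ^ 2 ≤ R ^ 2 := pow_le_pow_left₀ dist_nonneg (hx p hp) 2
    nlinarith
  have hgap : s * (r ^ 2 - R ^ 2 + (1 - s) * D ^ 2) ≤ 0 := by linarith
  linarith [nonpos_of_mul_nonpos_right hgap hs₀]

theorem dist_sq_add_smul_farthest_le (h : IsMEB P c r) {x q : EuclideanSpace ℝ (Fin d)}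
    (hq : q ∈ P) (hfar : ∀ p ∈ P, dist p x ≤ dist q x) {s : ℝ} (hs₀ : 0 ≤ s) (hs₁ : s ≤ 1) :
    dist (x + s • (q - x)) c ^ 2 ≤ (1 - s) ^ 2 * dist x c ^ 2 + s ^ 2 * r ^ 2 := by
  have hR := h.sq_radius_add_dist_sq_le hfar
  have hqc : dist c q ^ 2 ≤ r ^ 2 := by
    rw [dist_comm]; exact pow_le_pow_left₀ dist_nonneg (h.1 q hq) 2
  rw [dist_comm, dist_sq_add_smul_sub, dist_comm c x, dist_comm x q]
  nlinarith [mul_le_mul_of_nonneg_left hR (mul_nonneg hs₀ (sub_nonneg.2 hs₁)),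
    mul_le_mul_of_nonneg_left hqc hs₀]

theorem mul_dist_sq_le_of_farthest_point_iteration (h : IsMEB P c r)
    {x q : ℕ → EuclideanSpace ℝ (Fin d)} (hx₁ : x 1 ∈ P) (hq : ∀ t, 1 ≤ t → q t ∈ P)
    (hfar : ∀ t, 1 ≤ t → ∀ p ∈ P, dist p (x t) ≤ dist (q t) (x t))
    (hrec : ∀ t : ℕ, 1 ≤ t → x (t + 1) = x t + (1 / ((t : ℝ) + 1)) • (q t - x t))
    {t : ℕ} (ht : 1 ≤ t) : t * dist (x t) c ^ 2 ≤ r ^ 2 := by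
  induction t, ht using Nat.le_induction with
  | base => simpa using pow_le_pow_left₀ dist_nonneg (h.1 _ hx₁) 2
  | succ t ht ih =>
    have hpos : (0 : ℝ) < t + 1 := by positivity
    have hstep := h.dist_sq_add_smul_farthest_le (hq t ht) (hfar t ht)
      (s := 1 / ((t : ℝ) + 1)) (by positivity) (div_le_one_of_le₀ (by simp) hpos.le)
    rw [hrec t ht]
    push_cast
    calc ((t : ℝ) + 1) * dist (x t + (1 / ((t : ℝ) + 1)) • (q t - x t)) c ^ 2
        ≤ (t + 1) * ((1 - 1 / (t + 1)) ^ 2 * dist (x t) c ^ 2 + (1 / (t + 1)) ^ 2 * r ^ 2) := by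
          gcongr
      _ = (t * (t * dist (x t) c ^ 2) + r ^ 2) / (t + 1) := by
          field_simp
          ring
      _ ≤ (t * r ^ 2 + r ^ 2) / (t + 1) := by gcongr
      _ = r ^ 2 := by field_simp

end IsMEB

theorem badoiu_clarkson_approx_meb_general {d : ℕ}
    (Q : Set (EuclideanSpace ℝ (Fin d)))
    (cQ : EuclideanSpace ℝ (Fin d)) (rQ : ℝ) (hmeb : IsMEB Q cQ rQ)
    (c q : ℕ → EuclideanSpace ℝ (Fin d))
    (hc1 : c 1 ∈ Q)
    (hqmem : ∀ t : ℕ, 1 ≤ t → q t ∈ Q)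
    (hqfar : ∀ t : ℕ, 1 ≤ t → ∀ p ∈ Q, dist p (c t) ≤ dist (q t) (c t))
    (hrec : ∀ t : ℕ, 1 ≤ t → c (t + 1) = c t + (1 / ((t : ℝ) + 1)) • (q t - c t))
    (ε' : ℝ) (hε : 0 < ε') (N : ℕ) (hN : N = ⌈1 / ε' ^ 2⌉₊) :
    ∀ p ∈ Q, dist p (c N) ≤ (1 + ε') * rQ := by
  have hN₁ : 1 ≤ N := hN ▸ Nat.one_le_ceil_iff.2 (by positivity)
  have hNε : 1 ≤ N * ε' ^ 2 := by
    rw [← div_le_iff₀ (by positivity)]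
    exact hN ▸ Nat.le_ceil _
  have hmain := hmeb.mul_dist_sq_le_of_farthest_point_iteration hc1 hqmem hqfar hrec hN₁
  have hclose : dist (c N) cQ ≤ ε' * rQ := by
    refine (pow_le_pow_iff_left₀ dist_nonneg (mul_nonneg hε.le hmeb.radius_nonneg_s18) two_ne_zero).1 ?_
    nlinarith [mul_le_mul_of_nonneg_right hNε (sq_nonneg (dist (c N) cQ))]
  intro p hp
  calc dist p (c N) ≤ dist p cQ + dist (c N) cQ := dist_triangle_right _ _ _
    _ ≤ rQ + ε' * rQ := add_le_add (hmeb.1 p hp) hclose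
    _ = (1 + ε') * rQ := by ring

/-- with `Q`, `c_Q`, `r_Q` and the sequence `(c_t)` as in the Badoiu–Clarkson
iteration (`c₁ ∈ Q`, `c_{t+1} = c_t + (1/(t+1))·(q_t − c_t)` with `q_t ∈ Q` farthest from
`c_t`), for `ε' ∈ (0,1)` and `N = ⌈1/ε'²⌉`, every point of `Q` lies within distance
`(1+ε')·r_Q` of `c_N`. -/
theorem badoiu_clarkson_approx_meb {d : ℕ}
    (Q : Set (EuclideanSpace ℝ (Fin d))) (hfin : Q.Finite) (hne : Q.Nonempty)
    (cQ : EuclideanSpace ℝ (Fin d)) (rQ : ℝ) (hmeb : IsMEB Q cQ rQ)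
    (c q : ℕ → EuclideanSpace ℝ (Fin d))
    (hc1 : c 1 ∈ Q)
    (hqmem : ∀ t : ℕ, 1 ≤ t → q t ∈ Q)
    (hqfar : ∀ t : ℕ, 1 ≤ t → ∀ p ∈ Q, dist p (c t) ≤ dist (q t) (c t))
    (hrec : ∀ t : ℕ, 1 ≤ t → c (t + 1) = c t + (1 / ((t : ℝ) + 1)) • (q t - c t))
    (ε' : ℝ) (hε : 0 < ε') (hε1 : ε' < 1) (N : ℕ) (hN : N = ⌈1 / ε' ^ 2⌉₊) :
    ∀ p ∈ Q, dist p (c N) ≤ (1 + ε') * rQ :=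
  badoiu_clarkson_approx_meb_general Q cQ rQ hmeb c q hc1 hqmem hqfar hrec ε' hε N hN
end
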